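/- arXiv:2406.02274 — 3 statements merged into one kernel-verified Lean document; each statement's English description precedes it below -/
import Mathlib

section
/- Let 0 < λ₁ < λ₂ < 1 and let λ' ∈ (λ₁, λ₂) satisfy λ' > λ₁(1+λ₂)/(1+λ₁). Define f : [0,∞) → ℝ by f(t) = (λ₂ - λ')(1 - e^{-t}) + λ' t + 1. Then f(0) = 1, f'(0) = λ₂, f'' < 0 everywhere, f' > λ₁ everywhere, and f'(t)/f(t) > λ₁/(1 + λ₁ t) for all t ≥ 0. -/
open Real

/-- The theorem's `f` is `expRamp (λ₂ - λ') λ'`. -/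
noncomputable def expRamp (a b t : ℝ) : ℝ := a * (1 - exp (-t)) + b * t + 1

namespace expRamp

variable {a b : ℝ}

theorem hasDerivAt (a b t : ℝ) : HasDerivAt (expRamp a b) (a * exp (-t) + b) t := by
  have hexp : HasDerivAt (fun t : ℝ => exp (-t)) (exp (-t) * (-1)) t := (hasDerivAt_neg t).exp
  exact ((((hasDerivAt_const t 1).sub hexp).const_mul a).add
    ((hasDerivAt_id t).const_mul b)).add_const 1 |>.congr_deriv (by ring)

theorem deriv_eq (a b : ℝ) : deriv (expRamp a b) = fun t => a * exp (-t) + b :=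
  funext fun t => (hasDerivAt a b t).deriv

theorem deriv_deriv_eq (a b t : ℝ) : deriv (deriv (expRamp a b)) t = -(a * exp (-t)) := by
  have hexp : HasDerivAt (fun t : ℝ => exp (-t)) (exp (-t) * (-1)) t := (hasDerivAt_neg t).exp
  rw [deriv_eq]
  exact ((hexp.const_mul a).add_const b).deriv.trans (by ring)

theorem one_le (ha : 0 ≤ a) (hb : 0 ≤ b) {t : ℝ} (ht : 0 ≤ t) : 1 ≤ expRamp a b t := by
  have hexp : exp (-t) ≤ 1 := exp_le_one_iff.mpr (neg_nonpos.mpr ht)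
  unfold expRamp
  nlinarith

theorem div_one_add_mul_lt_deriv_div {c : ℝ} (ha : 0 ≤ a) (hb : 0 ≤ b) (hc : 0 ≤ c)
    (hcb : c * (1 + a + b) < b * (1 + c)) {t : ℝ} (ht : 0 ≤ t) :
    c / (1 + c * t) < deriv (expRamp a b) t / expRamp a b t := by
  have hct : 0 < 1 + c * t := by positivity
  rw [deriv_eq, div_lt_div_iff₀ hct (by linarith [one_le ha hb ht])]
  -- `(a e^{-t} + b)(1 + c t) - c f(t) = a e^{-t} (1 + c + c t) + b (1 + c) - c (1 + a + b)`
  have hrest : 0 ≤ a * exp (-t) * (1 + c + c * t) := by positivity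
  unfold expRamp
  nlinarith

end expRamp

theorem stmt0_general (l1 l2 l' : ℝ) (h1 : 0 < l1)
    (hl'1 : l1 < l') (hl'2 : l' < l2) (hl' : l' > l1 * (1 + l2) / (1 + l1))
    (f : ℝ → ℝ) (hf : ∀ t, f t = (l2 - l') * (1 - Real.exp (-t)) + l' * t + 1) :
    f 0 = 1 ∧ deriv f 0 = l2 ∧
      (∀ t : ℝ, 0 ≤ t → deriv (deriv f) t < 0) ∧
      (∀ t : ℝ, 0 ≤ t → l1 < deriv f t) ∧
      (∀ t : ℝ, 0 ≤ t → l1 / (1 + l1 * t) < deriv f t / f t) := by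
  obtain rfl : f = expRamp (l2 - l') l' := funext hf
  have ha : 0 < l2 - l' := sub_pos.mpr hl'2
  have hb : 0 ≤ l' := by linarith
  have hkey : l1 * (1 + (l2 - l') + l') < l' * (1 + l1) := by
    rw [gt_iff_lt, div_lt_iff₀ (by linarith)] at hl'
    linarith
  refine ⟨by simp [expRamp], by simp [expRamp.deriv_eq], fun t _ => ?_, fun t _ => ?_,
    fun t ht => expRamp.div_one_add_mul_lt_deriv_div ha.le hb h1.le hkey ht⟩
  · rw [expRamp.deriv_deriv_eq, neg_neg_iff_pos]
    positivity
  · rw [expRamp.deriv_eq]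
    have := mul_pos ha (exp_pos (-t))
    linarith

/-- properties of f(t) = (λ₂-λ')(1-e^{-t}) + λ' t + 1 on [0,∞). -/
theorem stmt0 (l1 l2 l' : ℝ) (h1 : 0 < l1) (h12 : l1 < l2) (h2 : l2 < 1)
    (hl'1 : l1 < l') (hl'2 : l' < l2) (hl' : l' > l1 * (1 + l2) / (1 + l1))
    (f : ℝ → ℝ) (hf : ∀ t, f t = (l2 - l') * (1 - Real.exp (-t)) + l' * t + 1) :
    f 0 = 1 ∧ deriv f 0 = l2 ∧
      (∀ t : ℝ, 0 ≤ t → deriv (deriv f) t < 0) ∧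
      (∀ t : ℝ, 0 ≤ t → l1 < deriv f t) ∧
      (∀ t : ℝ, 0 ≤ t → l1 / (1 + l1 * t) < deriv f t / f t) :=
  stmt0_general l1 l2 l' h1 hl'1 hl'2 hl' f hf
end

section
/- Let s ∈ [0,1], set K_s = (s+1), and for t₀ ∈ [0, π/4] let t_s = (s+1)·t₀. Then sin(t_s) ≤ (1+s)·sin(t₀) and cos(t_s) ≤ cos(t₀). Moreover, the expression cos²(t₀)(s+1)³ sin²(t₀)/sin³(t_s) - cos(t_s)cos(t₀)/sin(t₀) + sin(t₀)cos(t_s)/cos(t₀) is nonnegative for all t₀ ∈ (0, π/4] and s ∈ [0,1] with t_s < π/2. -/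
open Real

lemma sin_concave_aux {k t : ℝ} (hk : 1 ≤ k) (ht : 0 ≤ t) (hkt : k * t ≤ Real.pi) :
    Real.sin (k * t) ≤ k * Real.sin t := by
  have hk0 : 0 < k := lt_of_lt_of_le one_pos hk
  have hcc := strictConcaveOn_sin_Icc.concaveOn
  have hk1 : 1/k ≤ 1 := by rw [div_le_one hk0]; exact hk
  have h := hcc.2 (Set.mem_Icc.2 ⟨by positivity, hkt⟩)
    (Set.mem_Icc.2 ⟨le_rfl, Real.pi_pos.le⟩)
    (show (0:ℝ) ≤ 1/k by positivity)
    (show (0:ℝ) ≤ 1 - 1/k by linarith) (by ring)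
  have h2 : Real.sin t ≥ (1/k) * Real.sin (k * t) := by
    have he : (1/k) • (k * t) + (1 - 1/k) • (0:ℝ) = t := by
      rw [smul_eq_mul, smul_eq_mul, mul_zero, add_zero, one_div, ← mul_assoc, inv_mul_cancel₀ hk0.ne', one_mul]
    rw [he] at h
    simpa using h
  have := mul_le_mul_of_nonneg_left h2 hk0.le
  calc Real.sin (k * t) = k * ((1/k) * Real.sin (k*t)) := by field_simp
    _ ≤ k * Real.sin t := this

/-- key inequality in the projective-bundle deformation, with t_s = (s+1)t₀. -/
theorem stmt6 :
    (∀ s ∈ Set.Icc (0:ℝ) 1, ∀ t0 ∈ Set.Icc (0:ℝ) (Real.pi / 4),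
      Real.sin ((s + 1) * t0) ≤ (1 + s) * Real.sin t0 ∧
      Real.cos ((s + 1) * t0) ≤ Real.cos t0) ∧
    (∀ s ∈ Set.Icc (0:ℝ) 1, ∀ t0 ∈ Set.Ioc (0:ℝ) (Real.pi / 4),
      (s + 1) * t0 < Real.pi / 2 →
      0 ≤ (Real.cos t0)^2 * (s + 1)^3 * (Real.sin t0)^2 / (Real.sin ((s + 1) * t0))^3
          - Real.cos ((s + 1) * t0) * Real.cos t0 / Real.sin t0
          + Real.sin t0 * Real.cos ((s + 1) * t0) / Real.cos t0) := by
  have pi_pos := Real.pi_pos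
  have key : ∀ s ∈ Set.Icc (0:ℝ) 1, ∀ t0 ∈ Set.Icc (0:ℝ) (Real.pi / 4),
      Real.sin ((s + 1) * t0) ≤ (1 + s) * Real.sin t0 ∧
      Real.cos ((s + 1) * t0) ≤ Real.cos t0 := by
    intro s hs t0 ht0
    obtain ⟨hs0, hs1⟩ := hs
    obtain ⟨ht00, ht04⟩ := ht0
    constructor
    · have := sin_concave_aux (k := s+1) (t := t0) (by linarith) ht00
        (by nlinarith)
      linarith [this]
    · apply Real.cos_le_cos_of_nonneg_of_le_pi ht00
      · nlinarith
      · nlinarith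
  refine ⟨key, ?_⟩
  intro s hs t0 ht0 hlt
  obtain ⟨hs0, hs1⟩ := hs
  obtain ⟨ht00, ht04⟩ := ht0
  obtain ⟨hsin, hcos⟩ := key s ⟨hs0, hs1⟩ t0 ⟨ht00.le, ht04⟩
  set a := Real.sin t0
  set c := Real.cos t0
  set S := Real.sin ((s+1)*t0)
  set C := Real.cos ((s+1)*t0)
  have ha : 0 < a := Real.sin_pos_of_pos_of_lt_pi ht00 (by nlinarith)
  have hc : 0 < c := Real.cos_pos_of_mem_Ioo ⟨by linarith, by linarith⟩
  have hS : 0 < S := Real.sin_pos_of_pos_of_lt_pi (by nlinarith) (by nlinarith)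
  have hC : 0 ≤ C := Real.cos_nonneg_of_mem_Icc ⟨by nlinarith, hlt.le⟩
  -- first term bound: c²(s+1)³a²/S³ ≥ c²/a
  have hS3 : S^3 ≤ (1+s)^3 * a^3 := by
    have : S^3 ≤ ((1+s)*a)^3 := by
      apply pow_le_pow_left₀ hS.le hsin
    linarith [this, (by ring : ((1+s)*a)^3 = (1+s)^3*a^3)]
  have h1 : c^2 / a ≤ c^2 * (s+1)^3 * a^2 / S^3 := by
    rw [div_le_div_iff₀ ha (by positivity)]
    have expand : c^2 * (s+1)^3 * a^2 * a = c^2 * ((1+s)^3 * a^3) := by ring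
    rw [expand]
    exact mul_le_mul_of_nonneg_left hS3 (by positivity)
  have h2 : 0 ≤ c^2/a - C*c/a + a*C/c := by
    have : c^2/a - C*c/a = (c/a)*(c - C) := by ring
    rw [this]
    have : 0 ≤ (c/a)*(c-C) := mul_nonneg (by positivity) (by linarith)
    have h3 : 0 ≤ a*C/c := by positivity
    linarith
  linarith
end

section
/- Let f(t) = (2/π)cos(πt/2) and h(t) = 2/π on [-1,1]. Then for d = n = 2, the expression -h''/h + (1-h'²)/h² - f'h'/(fh) + 3/h² - 2f²/h⁴ equals π²(4 - 2cos²(πt/2))/4, which is at least π²/2 > 0 for all t. -/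
open Real

lemma deriv_eq_zero_of_forall_eq_const {h : ℝ → ℝ} {c : ℝ} (hh : ∀ t, h t = c) :
    deriv h = 0 := by
  rw [show h = fun _ => c from funext hh]
  exact deriv_const' c

lemma horizontalRicci_of_const (f h : ℝ → ℝ) {c : ℝ} (hh : ∀ t, h t = c) (t : ℝ) :
    -(deriv (deriv h) t) / h t + (1 - (deriv h t)^2) / (h t)^2
        - (deriv f t * deriv h t) / (f t * h t)
        + 3 / (h t)^2 - 2 * (f t)^2 / (h t)^4
      = 4 / c^2 - 2 * (f t)^2 / c^4 := by
  have hh' : deriv h = 0 := deriv_eq_zero_of_forall_eq_const hh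
  simp only [hh', deriv_zero, Pi.zero_apply, hh]
  ring

lemma mul_div_two_le_mul_four_sub_two_cos_sq_div_four {a : ℝ} (ha : 0 ≤ a) (x : ℝ) :
    a / 2 ≤ a * (4 - 2 * cos x ^ 2) / 4 := by
  nlinarith [cos_sq_le_one x]

/-- explicit evaluation of the horizontal Ricci curvature with
f(t) = (2/π)cos(πt/2), h ≡ 2/π. -/
theorem stmt9 (f h : ℝ → ℝ)
    (hf : ∀ t, f t = (2 / Real.pi) * Real.cos (Real.pi * t / 2))
    (hh : ∀ t, h t = 2 / Real.pi) :
    ∀ t : ℝ,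
      (-(deriv (deriv h) t) / h t + (1 - (deriv h t)^2) / (h t)^2
          - (deriv f t * deriv h t) / (f t * h t)
          + 3 / (h t)^2 - 2 * (f t)^2 / (h t)^4
        = Real.pi^2 * (4 - 2 * (Real.cos (Real.pi * t / 2))^2) / 4) ∧
      Real.pi^2 / 2 ≤ Real.pi^2 * (4 - 2 * (Real.cos (Real.pi * t / 2))^2) / 4 ∧
      0 < Real.pi^2 / 2 := by
  intro t
  refine ⟨?_, mul_div_two_le_mul_four_sub_two_cos_sq_div_four (by positivity) _, by positivity⟩
  rw [horizontalRicci_of_const f h hh t, hf]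
  field_simp
  ring
end
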